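/- (a) A set K ⊆ 𝒫(T) is a coherent and conjunctive SDS if and only if K = sds(D) for some coherent SDT D. (b) If cl is finitary, then K ⊆ 𝒫(T) is a finitely coherent and conjunctive SDS if and only if K = sds(D) for some coherent SDT D. In both cases the representing D is necessarily sdt(K). -/

import Mathlib

universe u

variable {T : Type u}

/-- `cl` is a closure operator on subsets of `T`. -/
def IsClosure (cl : Set T → Set T) : Prop :=
  (∀ A : Set T, A ⊆ cl A) ∧
  (∀ A B : Set T, A ⊆ B → cl A ⊆ cl B) ∧
  (∀ A : Set T, cl (cl A) = cl A)

/-- `cl` is finitary: the closure of a set is the union of the closures of its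
finite subsets. -/
def IsFinitary (cl : Set T → Set T) : Prop :=
  ∀ A : Set T, cl A = ⋃ F ∈ {F : Set T | F.Finite ∧ F ⊆ A}, cl F

/-- A coherent set of desirable things (SDT): closed and avoiding the forbidden
things `Tneg`. -/
def CohSDT (cl : Set T → Set T) (Tneg : Set T) (D : Set T) : Prop :=
  cl D = D ∧ D ∩ Tneg = ∅

/-- Selection maps of a collection `W` of sets of things: maps choosing an
element of each member of `W`. -/
def Sel (W : Set (Set T)) : Type u :=
  {σ : Set T → T // ∀ A ∈ W, σ A ∈ A}

/-- A coherent set of desirable sets of things (SDS): axioms K1–K5. -/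
def CohSDS (cl : Set T → Set T) (Tneg : Set T) (K : Set (Set T)) : Prop :=
  (∅ : Set T) ∉ K ∧
  (∀ A₁ ∈ K, ∀ A₂ : Set T, A₁ ⊆ A₂ → A₂ ∈ K) ∧
  (∀ A ∈ K, A \ Tneg ∈ K) ∧
  (∀ t ∈ cl (∅ : Set T), ({t} : Set T) ∈ K) ∧
  (∀ W ⊆ K, W.Nonempty →
    ∀ f : Sel W → T, (∀ σ : Sel W, f σ ∈ cl (σ.1 '' W)) → Set.range f ∈ K)

/-- A finitely coherent SDS: axioms K1–K4 together with K5 restricted to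
nonempty finite subcollections. -/
def FinCohSDS (cl : Set T → Set T) (Tneg : Set T) (K : Set (Set T)) : Prop :=
  (∅ : Set T) ∉ K ∧
  (∀ A₁ ∈ K, ∀ A₂ : Set T, A₁ ⊆ A₂ → A₂ ∈ K) ∧
  (∀ A ∈ K, A \ Tneg ∈ K) ∧
  (∀ t ∈ cl (∅ : Set T), ({t} : Set T) ∈ K) ∧
  (∀ W ⊆ K, W.Finite → W.Nonempty →
    ∀ f : Sel W → T, (∀ σ : Sel W, f σ ∈ cl (σ.1 '' W)) → Set.range f ∈ K)

/-- A finitely coherent set of desirable finite sets of things (SDFS):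
axioms F1–F5. -/
def FinCohSDFS (cl : Set T → Set T) (Tneg : Set T) (K : Set (Set T)) : Prop :=
  (∀ F ∈ K, F.Finite) ∧
  (∅ : Set T) ∉ K ∧
  (∀ F₁ ∈ K, ∀ F₂ : Set T, F₂.Finite → F₁ ⊆ F₂ → F₂ ∈ K) ∧
  (∀ F ∈ K, F \ Tneg ∈ K) ∧
  (∀ t ∈ cl (∅ : Set T), ({t} : Set T) ∈ K) ∧
  (∀ W ⊆ K, W.Finite → W.Nonempty →
    ∀ f : Sel W → T, (∀ σ : Sel W, f σ ∈ cl (σ.1 '' W)) → Set.range f ∈ K)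

/-- The set of things whose singletons belong to `K`. -/
def sdt (K : Set (Set T)) : Set T := {t | ({t} : Set T) ∈ K}

/-- The SDS of all sets of things meeting `D`. -/
def sds (D : Set T) : Set (Set T) := {A | (A ∩ D).Nonempty}

/-- The SDFS of all finite sets of things meeting `D`. -/
def sdfs (D : Set T) : Set (Set T) := {F | F.Finite ∧ (F ∩ D).Nonempty}

/-- The event `𝒟_A` of all coherent SDTs meeting `A`. -/
def evA (cl : Set T → Set T) (Tneg : Set T) (A : Set T) : Set (Set T) :=
  {D | CohSDT cl Tneg D ∧ (A ∩ D).Nonempty}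

/-- The event `E(W)` of all coherent SDTs meeting every member of `W`
(with `E(∅)` equal to the set of all coherent SDTs). -/
def ev (cl : Set T → Set T) (Tneg : Set T) (W : Set (Set T)) : Set (Set T) :=
  {D | CohSDT cl Tneg D ∧ ∀ A ∈ W, (A ∩ D).Nonempty}

/-- An SDS is conjunctive if every desirable set contains a desirable
singleton. -/
def Conjunctive (K : Set (Set T)) : Prop :=
  ∀ A ∈ K, ∃ t ∈ A, ({t} : Set T) ∈ K

/-- Completeness of an SDS. -/
def CompleteSDS (K : Set (Set T)) : Prop :=
  ∀ A₁ A₂ : Set T, A₁ ∪ A₂ ∈ K → A₁ ∈ K ∨ A₂ ∈ K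

/-- The finitary part `K^f` of an SDS. -/
def finPart (K : Set (Set T)) : Set (Set T) :=
  {A | ∃ B ∈ K, B.Finite ∧ B ⊆ A}

/-- An SDS is finitary if every desirable set has a finite desirable subset. -/
def FinitarySDS (K : Set (Set T)) : Prop :=
  ∀ A ∈ K, ∃ B, B.Finite ∧ B ⊆ A ∧ B ∈ K

/-- The lattice of events `E`. -/
def Ecal (cl : Set T → Set T) (Tneg : Set T) : Set (Set (Set T)) :=
  {E | ∃ W : Set (Set T), E = ev cl Tneg W}

/-- The lattice of finitary events `E_fin`. -/
def Efin (cl : Set T → Set T) (Tneg : Set T) : Set (Set (Set T)) :=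
  {E | ∃ W : Set (Set T), W.Finite ∧ E = ev cl Tneg W}

/-- A filter on a lattice of events `L` ordered by inclusion. -/
def IsFilterOn (L F : Set (Set (Set T))) : Prop :=
  F ⊆ L ∧ F.Nonempty ∧
  (∀ E₁ ∈ F, ∀ E₂ ∈ L, E₁ ⊆ E₂ → E₂ ∈ F) ∧
  (∀ E₁ ∈ F, ∀ E₂ ∈ F, E₁ ∩ E₂ ∈ F)

/-- A proper filter on `L`. -/
def IsProperFilterOn (L F : Set (Set (Set T))) : Prop :=
  IsFilterOn L F ∧ F ≠ L

/-- A prime filter on `L`. -/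
def IsPrimeFilterOn (L F : Set (Set (Set T))) : Prop :=
  IsProperFilterOn L F ∧
  ∀ E₁ ∈ L, ∀ E₂ ∈ L, E₁ ∪ E₂ ∈ F → E₁ ∈ F ∨ E₂ ∈ F

/-- A proper principal filter on `L`: the upset of some nonempty `E₀ ∈ L`. -/
def IsProperPrincipalFilterOn (L F : Set (Set (Set T))) : Prop :=
  ∃ E₀ ∈ L, E₀ ≠ (∅ : Set (Set T)) ∧ F = {E' | E' ∈ L ∧ E₀ ⊆ E'}

/-- The map `f̂` sending an SDS to the collection of events of its finite
subcollections. -/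
def fhat (cl : Set T → Set T) (Tneg : Set T) (K : Set (Set T)) :
    Set (Set (Set T)) :=
  {E | ∃ W : Set (Set T), W ⊆ K ∧ W.Finite ∧ E = ev cl Tneg W}

/-- The map `f` sending an SDS to the collection of events of all of its
subcollections. -/
def fprin (cl : Set T → Set T) (Tneg : Set T) (K : Set (Set T)) :
    Set (Set (Set T)) :=
  {E | ∃ W : Set (Set T), W ⊆ K ∧ E = ev cl Tneg W}

/-- The map `d` sending a collection of events to the SDS it determines. -/
def dmap (cl : Set T → Set T) (Tneg : Set T) (F : Set (Set (Set T))) :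
    Set (Set T) :=
  {A : Set T | evA cl Tneg A ∈ F}

/-- `K` is finitely consistent: it is included in some finitely coherent SDS. -/
def FinConsistent (cl : Set T → Set T) (Tneg : Set T) (K : Set (Set T)) : Prop :=
  ∃ K' : Set (Set T), FinCohSDS cl Tneg K' ∧ K ⊆ K'

/-- `K` is consistent: it is included in some coherent SDS. -/
def Consistent (cl : Set T → Set T) (Tneg : Set T) (K : Set (Set T)) : Prop :=
  ∃ K' : Set (Set T), CohSDS cl Tneg K' ∧ K ⊆ K'

/-- The finitary closure operator on SDSes (with value `𝒫(T)` when `K` is not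
finitely consistent, via the empty-intersection convention). -/
def clFin (cl : Set T → Set T) (Tneg : Set T) (K : Set (Set T)) : Set (Set T) :=
  ⋂₀ {K' : Set (Set T) | FinCohSDS cl Tneg K' ∧ K ⊆ K'}

/-- The closure operator on SDSes (with value `𝒫(T)` when `K` is not
consistent, via the empty-intersection convention). -/
def clSDS (cl : Set T → Set T) (Tneg : Set T) (K : Set (Set T)) : Set (Set T) :=
  ⋂₀ {K' : Set (Set T) | CohSDS cl Tneg K' ∧ K ⊆ K'}

/-!
For a conjunctive `K`, upward closure gives `K = sds (sdt K)`, so everything reduces to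
`sdt K` being a coherent SDT. It avoids `Tneg` by K1 and K3; it is closed because K5,
applied to the singletons of `F ⊆ sdt K` with the constant function `t` for `t ∈ cl F`,
puts `{t}` in `K` (when `cl` is finitary, finite `F` suffice). Conversely, K5 holds in
`sds D` because some selection map takes all its values in `D`.
-/

/-- Axiom K5 of an SDS `K` for one collection `W`. -/
def SelectionClosed (cl : Set T → Set T) (K W : Set (Set T)) : Prop :=
  ∀ f : Sel W → T, (∀ σ : Sel W, f σ ∈ cl (σ.1 '' W)) → Set.range f ∈ K

namespace Sel

lemma exists_image_subset {W : Set (Set T)} {D : Set T} (hW : W.Nonempty)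
    (h : ∀ A ∈ W, (A ∩ D).Nonempty) : ∃ σ : Sel W, σ.1 '' W ⊆ D := by
  classical
  obtain ⟨A₀, hA₀⟩ := hW
  let t₀ : T := (h A₀ hA₀).some
  refine ⟨⟨fun A => if hA : A ∈ W then (h A hA).some else t₀,
    fun A hA => by simpa [hA] using (h A hA).some_mem.1⟩, ?_⟩
  rintro _ ⟨A, hA, rfl⟩
  simpa [hA] using (h A hA).some_mem.2

lemma image_singletons {F : Set T} (σ : Sel ((fun d => ({d} : Set T)) '' F)) :
    σ.1 '' ((fun d => ({d} : Set T)) '' F) = F := by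
  have hσ : ∀ d ∈ F, σ.1 {d} = d := fun d hd => σ.2 {d} ⟨d, hd, rfl⟩
  ext x
  constructor
  · rintro ⟨_, ⟨d, hd, rfl⟩, rfl⟩
    rwa [hσ d hd]
  · exact fun hx => ⟨{x}, ⟨x, hx, rfl⟩, hσ x hx⟩

end Sel

lemma singleton_mem_of_mem_cl {cl : Set T → Set T} {K : Set (Set T)} {F : Set T} {t : T}
    (hF : F.Nonempty) (hK : SelectionClosed cl K ((fun d => ({d} : Set T)) '' F))
    (ht : t ∈ cl F) : ({t} : Set T) ∈ K := by
  obtain ⟨σ, -⟩ := Sel.exists_image_subset (W := (fun d => ({d} : Set T)) '' F)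
    (D := Set.univ) (hF.image _)
    (by rintro _ ⟨d, -, rfl⟩; exact ⟨d, rfl, trivial⟩)
  have : Nonempty (Sel ((fun d => ({d} : Set T)) '' F)) := ⟨σ⟩
  simpa only [Set.range_const] using
    hK (fun _ => t) fun σ => by rw [Sel.image_singletons σ]; exact ht

lemma cl_subset_sdt {cl : Set T → Set T} {K : Set (Set T)} {F : Set T}
    (hK4 : ∀ t ∈ cl (∅ : Set T), ({t} : Set T) ∈ K)
    (hK5 : F.Nonempty → SelectionClosed cl K ((fun d => ({d} : Set T)) '' F)) :
    cl F ⊆ sdt K := by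
  intro t ht
  rcases F.eq_empty_or_nonempty with rfl | hF
  · exact hK4 t ht
  · exact singleton_mem_of_mem_cl hF (hK5 hF) ht

lemma singletons_subset {K : Set (Set T)} {F : Set T} (hF : F ⊆ sdt K) :
    (fun d => ({d} : Set T)) '' F ⊆ K := by
  rintro _ ⟨d, hd, rfl⟩
  exact hF hd

lemma CohSDS.cl_sdt_subset {cl : Set T → Set T} {Tneg : Set T} {K : Set (Set T)}
    (hK : CohSDS cl Tneg K) : cl (sdt K) ⊆ sdt K :=
  cl_subset_sdt hK.2.2.2.1 fun hF => hK.2.2.2.2 _ (singletons_subset le_rfl) (hF.image _)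

lemma FinCohSDS.cl_sdt_subset {cl : Set T → Set T} {Tneg : Set T} {K : Set (Set T)}
    (hfin : IsFinitary cl) (hK : FinCohSDS cl Tneg K) : cl (sdt K) ⊆ sdt K := by
  rw [hfin]
  refine Set.iUnion₂_subset fun F ⟨hFfin, hFK⟩ => ?_
  exact cl_subset_sdt hK.2.2.2.1 fun hF =>
    hK.2.2.2.2 _ (singletons_subset hFK) (hFfin.image _) (hF.image _)

lemma sdt_inter_eq_empty {Tneg : Set T} {K : Set (Set T)} (hK1 : (∅ : Set T) ∉ K)
    (hK3 : ∀ A ∈ K, A \ Tneg ∈ K) : sdt K ∩ Tneg = ∅ := by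
  refine Set.eq_empty_of_forall_notMem fun t ⟨htK, htneg⟩ => hK1 ?_
  simpa only [Set.sdiff_eq_empty.mpr (Set.singleton_subset_iff.mpr htneg)] using hK3 {t} htK

lemma Conjunctive.eq_sds_sdt {K : Set (Set T)} (hK : Conjunctive K)
    (hK2 : ∀ A₁ ∈ K, ∀ A₂ : Set T, A₁ ⊆ A₂ → A₂ ∈ K) : K = sds (sdt K) := by
  ext A
  constructor
  · intro hA
    obtain ⟨t, htA, htK⟩ := hK A hA
    exact ⟨t, htA, htK⟩
  · rintro ⟨t, htA, htK⟩
    exact hK2 {t} htK A (Set.singleton_subset_iff.mpr htA)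

lemma Conjunctive.exists_cohSDT_eq_sds {cl : Set T → Set T} {Tneg : Set T}
    {K : Set (Set T)} (hK : Conjunctive K) (hext : ∀ A : Set T, A ⊆ cl A)
    (hK1 : (∅ : Set T) ∉ K)
    (hK2 : ∀ A₁ ∈ K, ∀ A₂ : Set T, A₁ ⊆ A₂ → A₂ ∈ K) (hK3 : ∀ A ∈ K, A \ Tneg ∈ K)
    (hclosed : cl (sdt K) ⊆ sdt K) : ∃ D : Set T, CohSDT cl Tneg D ∧ K = sds D :=
  ⟨sdt K, ⟨hclosed.antisymm (hext _), sdt_inter_eq_empty hK1 hK3⟩, hK.eq_sds_sdt hK2⟩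

section sds

variable {cl : Set T → Set T} {Tneg D : Set T}

lemma sdt_sds : sdt (sds D) = D := by
  ext t
  exact Set.singleton_inter_nonempty

lemma conjunctive_sds : Conjunctive (sds D) := by
  rintro A ⟨t, htA, htD⟩
  exact ⟨t, htA, t, rfl, htD⟩

lemma selectionClosed_sds (hmono : Monotone cl) (hD : cl D = D) {W : Set (Set T)}
    (hW : W ⊆ sds D) (hne : W.Nonempty) : SelectionClosed cl (sds D) W := by
  intro f hf
  obtain ⟨σ, hσ⟩ := Sel.exists_image_subset hne hW
  exact ⟨f σ, ⟨σ, rfl⟩, hD ▸ hmono hσ (hf σ)⟩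

lemma cohSDS_sds (hmono : Monotone cl) (hD : CohSDT cl Tneg D) : CohSDS cl Tneg (sds D) := by
  obtain ⟨hclD, hDneg⟩ := hD
  refine ⟨fun ⟨_, ht, _⟩ => ht, ?_, ?_, ?_, fun W hW hne => selectionClosed_sds hmono hclD hW hne⟩
  · rintro A₁ ⟨t, ht, htD⟩ A₂ h
    exact ⟨t, h ht, htD⟩
  · rintro A ⟨t, ht, htD⟩
    exact ⟨t, ⟨ht, fun htneg => (Set.eq_empty_iff_forall_notMem.mp hDneg) t ⟨htD, htneg⟩⟩, htD⟩
  · intro t ht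
    exact ⟨t, rfl, hclD ▸ hmono (Set.empty_subset D) ht⟩

end sds

lemma CohSDS.finCohSDS {cl : Set T → Set T} {Tneg : Set T} {K : Set (Set T)}
    (hK : CohSDS cl Tneg K) : FinCohSDS cl Tneg K :=
  ⟨hK.1, hK.2.1, hK.2.2.1, hK.2.2.2.1, fun W hW _ => hK.2.2.2.2 W hW⟩

theorem conjunctive_coherent_characterisation_general (T : Type u)
    (cl : Set T → Set T) (Tneg : Set T)
    (hcl : IsClosure cl)
    (K : Set (Set T)) :
    ((CohSDS cl Tneg K ∧ Conjunctive K) ↔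
      ∃ D : Set T, CohSDT cl Tneg D ∧ K = sds D) ∧
    (IsFinitary cl →
      ((FinCohSDS cl Tneg K ∧ Conjunctive K) ↔
        ∃ D : Set T, CohSDT cl Tneg D ∧ K = sds D)) ∧
    (∀ D : Set T, K = sds D → D = sdt K) := by
  have hmono : Monotone cl := hcl.2.1
  refine ⟨⟨?_, ?_⟩, fun hfin => ⟨?_, ?_⟩, fun D hK => hK ▸ sdt_sds.symm⟩
  · rintro ⟨hK, hconj⟩
    exact hconj.exists_cohSDT_eq_sds hcl.1 hK.1 hK.2.1 hK.2.2.1 hK.cl_sdt_subset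
  · rintro ⟨D, hD, rfl⟩
    exact ⟨cohSDS_sds hmono hD, conjunctive_sds⟩
  · rintro ⟨hK, hconj⟩
    exact hconj.exists_cohSDT_eq_sds hcl.1 hK.1 hK.2.1 hK.2.2.1 (hK.cl_sdt_subset hfin)
  · rintro ⟨D, hD, rfl⟩
    exact ⟨(cohSDS_sds hmono hD).finCohSDS, conjunctive_sds⟩

/-- Characterisation of the conjunctive (finitely) coherent SDSes. -/
theorem conjunctive_coherent_characterisation (T : Type u) [Nonempty T]
    (cl : Set T → Set T) (Tneg : Set T)
    (hcl : IsClosure cl) (hsan : cl (∅ : Set T) ∩ Tneg = ∅)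
    (K : Set (Set T)) :
    ((CohSDS cl Tneg K ∧ Conjunctive K) ↔
      ∃ D : Set T, CohSDT cl Tneg D ∧ K = sds D) ∧
    (IsFinitary cl →
      ((FinCohSDS cl Tneg K ∧ Conjunctive K) ↔
        ∃ D : Set T, CohSDT cl Tneg D ∧ K = sds D)) ∧
    (∀ D : Set T, K = sds D → D = sdt K) :=
  conjunctive_coherent_characterisation_general T cl Tneg hcl K
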